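/- arXiv:2303.05458 — 2 statements merged into one kernel-verified Lean document; each statement's English description precedes it below -/
import Mathlib

section
/- Consider the 2-dimensional affine-Gaussian transition with state (v, p): under action a, v' = v + Δv(a) + g(a)·ε_v and p' = p + v'·Δt + ε_p, where ε_v ∼ N(0, σ_v²) and ε_p ∼ N(0, σ_p²) are independent. Let V(v,p) = c·v·p with c > 0, and suppose Δv(a₁) > Δv(a₀) and g(a₁)² > g(a₀)². Then E[V(v',p') | a₁] − E[V(v',p') | a₀] > 0 if and only if p/Δt + 2v + Δv(a₁) + Δv(a₀) + σ_v² (g(a₁)² − g(a₀)²)/(Δv(a₁) − Δv(a₀)) > 0, where the expectation is under the true joint distribution of (v', p'). -/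
open MeasureTheory ProbabilityTheory
open scoped NNReal

/-!
Under action `a` write `m = v + Δv(a)`, so that `v' = m + g(a) ε_v` and
`p' = p + v' Δt + ε_p`. Since `ε_p` is centred and independent of `ε_v`, it drops out of
`E[c v' p']`, leaving a quadratic polynomial in `ε_v` whose expectation is
`c m (p + m Δt) + c g(a)² Δt σ_v²`. The difference of these values for `a₁` and `a₀` factors as
`c Δt (Δv(a₁) - Δv(a₀))` times the bracket of the criterion, and the factor is positive.
-/

section GaussianMoments

variable {μ : ℝ} {v : ℝ≥0}

lemma integrable_fun_id_gaussianReal : Integrable (fun x : ℝ => x) (gaussianReal μ v) :=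
  (memLp_id_gaussianReal 1).integrable (by simp)

lemma integrable_sq_gaussianReal : Integrable (fun x : ℝ => x ^ 2) (gaussianReal μ v) :=
  (memLp_id_gaussianReal 2).integrable_sq

lemma integral_sq_gaussianReal : ∫ x, x ^ 2 ∂gaussianReal μ v = μ ^ 2 + v := by
  have h := variance_eq_sub (memLp_id_gaussianReal (μ := μ) (v := v) 2)
  simp only [variance_id_gaussianReal, Pi.pow_apply, id, integral_id_gaussianReal] at h
  linarith

lemma integral_quadratic_gaussianReal (a b c : ℝ) :
    ∫ x, (a + b * x + c * x ^ 2) ∂gaussianReal μ v = a + b * μ + c * (μ ^ 2 + v) := by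
  have hlin : Integrable (fun x : ℝ => b * x) (gaussianReal μ v) :=
    integrable_fun_id_gaussianReal.const_mul b
  rw [integral_add (f := fun x => a + b * x) ((integrable_const a).add hlin)
      (integrable_sq_gaussianReal.const_mul c),
    integral_add (integrable_const a) hlin, integral_const_mul, integral_const_mul,
    integral_id_gaussianReal, integral_sq_gaussianReal]
  simp

lemma integrable_quadratic_gaussianReal (a b c : ℝ) :
    Integrable (fun x : ℝ => a + b * x + c * x ^ 2) (gaussianReal μ v) :=
  ((integrable_const a).add (integrable_fun_id_gaussianReal.const_mul b)).add
    (integrable_sq_gaussianReal.const_mul c)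

end GaussianMoments

lemma integral_value_gaussian_prod (c m q g Δt : ℝ) (s t : ℝ≥0) :
    ∫ e : ℝ × ℝ, c * (m + g * e.1) * (q + (m + g * e.1) * Δt + e.2)
        ∂(gaussianReal 0 s).prod (gaussianReal 0 t)
      = c * m * (q + m * Δt) + c * g ^ 2 * Δt * s := by
  set a₀ := c * m * (q + m * Δt)
  set a₁ := c * g * (q + m * Δt) + c * m * g * Δt
  set a₂ := c * g ^ 2 * Δt
  have hsplit : (fun e : ℝ × ℝ => c * (m + g * e.1) * (q + (m + g * e.1) * Δt + e.2))
      = fun e => (a₀ + a₁ * e.1 + a₂ * e.1 ^ 2) + (c * m + c * g * e.1) * e.2 := by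
    funext e
    ring
  have hslope : Integrable (fun x : ℝ => c * m + c * g * x) (gaussianReal 0 s) :=
    (integrable_const _).add (integrable_fun_id_gaussianReal.const_mul _)
  rw [hsplit,
    integral_add ((integrable_quadratic_gaussianReal _ _ _).comp_fst _)
      (hslope.mul_prod integrable_fun_id_gaussianReal),
    integral_fun_fst (f := fun x => a₀ + a₁ * x + a₂ * x ^ 2),
    integral_prod_mul (fun x => c * m + c * g * x) (fun y => y),
    integral_quadratic_gaussianReal, integral_id_gaussianReal]
  simp

theorem true_model_value_comparison_general
    (v p c Δt σv σp : ℝ) (dv g : Fin 2 → ℝ)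
    (hc : 0 < c) (hΔt : 0 < Δt)
    (hdv : dv 0 < dv 1) :
    (letI EV : Fin 2 → ℝ := fun a =>
      ∫ e : ℝ × ℝ,
        c * (v + dv a + g a * e.1) * (p + (v + dv a + g a * e.1) * Δt + e.2)
        ∂((gaussianReal 0 (σv ^ 2).toNNReal).prod (gaussianReal 0 (σp ^ 2).toNNReal))
    0 < EV 1 - EV 0) ↔
      0 < p / Δt + 2 * v + dv 1 + dv 0 +
        σv ^ 2 * ((g 1) ^ 2 - (g 0) ^ 2) / (dv 1 - dv 0) := by
  have hd : 0 < dv 1 - dv 0 := sub_pos.mpr hdv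
  have hvar : (((σv ^ 2).toNNReal : ℝ≥0) : ℝ) = σv ^ 2 := Real.coe_toNNReal _ (sq_nonneg σv)
  simp only [integral_value_gaussian_prod, hvar]
  have hfactor :
      c * (v + dv 1) * (p + (v + dv 1) * Δt) + c * g 1 ^ 2 * Δt * σv ^ 2
        - (c * (v + dv 0) * (p + (v + dv 0) * Δt) + c * g 0 ^ 2 * Δt * σv ^ 2)
      = c * Δt * (dv 1 - dv 0) * (p / Δt + 2 * v + dv 1 + dv 0 +
          σv ^ 2 * (g 1 ^ 2 - g 0 ^ 2) / (dv 1 - dv 0)) := by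
    field_simp
    ring
  rw [hfactor]
  exact mul_pos_iff_of_pos_left (by positivity)

/-- in the 1-D Driving model, with V(v,p) = c·v·p, the true-model
expected next value is higher under a₁ than a₀ iff
p/Δt + 2v + Δv(a₁) + Δv(a₀) + σ_v²(g(a₁)² − g(a₀)²)/(Δv(a₁) − Δv(a₀)) > 0.
The expectation is over the joint distribution of (ε_v, ε_p), two independent
centered Gaussians with variances σ_v², σ_p², with v' = v + Δv(a) + g(a)ε_v and
p' = p + v'Δt + ε_p. -/
theorem true_model_value_comparison
    (v p c Δt σv σp : ℝ) (dv g : Fin 2 → ℝ)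
    (hc : 0 < c) (hΔt : 0 < Δt) (hσv : 0 < σv)
    (hdv : dv 0 < dv 1) (hg : (g 0) ^ 2 < (g 1) ^ 2) :
    (letI EV : Fin 2 → ℝ := fun a =>
      ∫ e : ℝ × ℝ,
        c * (v + dv a + g a * e.1) * (p + (v + dv a + g a * e.1) * Δt + e.2)
        ∂((gaussianReal 0 (σv ^ 2).toNNReal).prod (gaussianReal 0 (σp ^ 2).toNNReal))
    0 < EV 1 - EV 0) ↔
      0 < p / Δt + 2 * v + dv 1 + dv 0 +
        σv ^ 2 * ((g 1) ^ 2 - (g 0) ^ 2) / (dv 1 - dv 0) :=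
  true_model_value_comparison_general v p c Δt σv σp dv g hc hΔt hdv
end

section
/- In the same 2-dimensional affine-Gaussian transition, let the 'lagged' model replace the joint distribution of (v', p') by the product of its marginals (same means and same per-coordinate variances, zero covariance). With V(v,p) = c·v·p, c > 0, and Δv(a₁) > Δv(a₀): the lagged-model expectation satisfies Ê[V(v',p') | a₁] − Ê[V(v',p') | a₀] > 0 if and only if p/Δt + 2v + Δv(a₁) + Δv(a₀) > 0. -/
open MeasureTheory ProbabilityTheory

/-! The lagged expectation only sees the means of the two coordinates, and centred Gaussian
noise drops out of those: they are `v + Δv(a)` and `p + (v + Δv(a)) Δt`. The difference of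
`c m (p + m Δt)` at the two mean velocities factors as
`c (Δv(a₁) - Δv(a₀)) Δt · (p / Δt + 2 v + Δv(a₁) + Δv(a₀))`, whose first factor is positive. -/

lemma integral_affine_prod {μ ν : Measure ℝ} [IsProbabilityMeasure μ] [IsProbabilityMeasure ν]
    (hμ : Integrable id μ) (hν : Integrable id ν) (a b d : ℝ) :
    ∫ e : ℝ × ℝ, (a + b * e.1 + d * e.2) ∂μ.prod ν =
      a + b * ∫ x, x ∂μ + d * ∫ y, y ∂ν := by
  have h₁ : Integrable (fun e : ℝ × ℝ => b * e.1) (μ.prod ν) := (hμ.comp_fst ν).const_mul b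
  have h₂ : Integrable (fun e : ℝ × ℝ => d * e.2) (μ.prod ν) := (hν.comp_snd μ).const_mul d
  have h₀ : Integrable (fun e : ℝ × ℝ => a + b * e.1) (μ.prod ν) := (integrable_const a).add h₁
  rw [integral_add h₀ h₂, integral_add (integrable_const a) h₁,
    integral_const_mul, integral_const_mul, integral_fun_fst (fun x => x),
    integral_fun_snd (fun y => y)]
  simp

lemma integral_affine_prod_gaussianReal (w₁ w₂ : NNReal) (a b d : ℝ) :
    ∫ e : ℝ × ℝ, (a + b * e.1 + d * e.2) ∂(gaussianReal 0 w₁).prod (gaussianReal 0 w₂) = a := by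
  rw [integral_affine_prod ((memLp_id_gaussianReal 1).integrable le_rfl)
    ((memLp_id_gaussianReal 1).integrable le_rfl), integral_id_gaussianReal,
    integral_id_gaussianReal]
  ring

lemma mean_value_gap_pos_iff {c Δt v p x₀ x₁ : ℝ} (hc : 0 < c) (hΔt : 0 < Δt) (hx : x₀ < x₁) :
    0 < c * (v + x₁) * (p + (v + x₁) * Δt) - c * (v + x₀) * (p + (v + x₀) * Δt) ↔
      0 < p / Δt + 2 * v + x₁ + x₀ := by
  have hfactor : c * (v + x₁) * (p + (v + x₁) * Δt) - c * (v + x₀) * (p + (v + x₀) * Δt) =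
      c * (x₁ - x₀) * Δt * (p / Δt + 2 * v + x₁ + x₀) := by
    field_simp
    ring
  rw [hfactor, mul_pos_iff_of_pos_left (by have := sub_pos.2 hx; positivity)]

theorem lagged_model_value_comparison_general
    (v p c Δt σv σp : ℝ) (dv g : Fin 2 → ℝ)
    (hc : 0 < c) (hΔt : 0 < Δt)
    (hdv : dv 0 < dv 1) :
    (letI noise := (gaussianReal 0 (σv ^ 2).toNNReal).prod (gaussianReal 0 (σp ^ 2).toNNReal)
    letI EVhat : Fin 2 → ℝ := fun a =>
      c * (∫ e : ℝ × ℝ, (v + dv a + g a * e.1) ∂noise) *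
        (∫ e : ℝ × ℝ, (p + (v + dv a + g a * e.1) * Δt + e.2) ∂noise)
    0 < EVhat 1 - EVhat 0) ↔
      0 < p / Δt + 2 * v + dv 1 + dv 0 := by
  have hE := integral_affine_prod_gaussianReal (σv ^ 2).toNNReal (σp ^ 2).toNNReal
  have hvel : ∀ i, ∫ e : ℝ × ℝ, (v + dv i + g i * e.1)
      ∂(gaussianReal 0 (σv ^ 2).toNNReal).prod (gaussianReal 0 (σp ^ 2).toNNReal) = v + dv i :=
    fun i => by simpa using hE (v + dv i) (g i) 0
  have hpos : ∀ i, ∫ e : ℝ × ℝ, (p + (v + dv i + g i * e.1) * Δt + e.2)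
      ∂(gaussianReal 0 (σv ^ 2).toNNReal).prod (gaussianReal 0 (σp ^ 2).toNNReal) =
        p + (v + dv i) * Δt := fun i => by
    rw [← hE (p + (v + dv i) * Δt) (g i * Δt) 1]
    congr 1
    ext e
    ring
  simp only [hvel, hpos]
  exact mean_value_gap_pos_iff hc hΔt hdv

/-- in the 1-D Driving model, the lagged model replaces the joint
distribution of (v',p') by the product of its marginals, so its expectation of
V(v,p) = c·v·p is the product of the marginal means: Ê[c v' p'] = c·E[v']·E[p'].
Then Ê[V|a₁] − Ê[V|a₀] > 0 iff p/Δt + 2v + Δv(a₁) + Δv(a₀) > 0. -/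
theorem lagged_model_value_comparison
    (v p c Δt σv σp : ℝ) (dv g : Fin 2 → ℝ)
    (hc : 0 < c) (hΔt : 0 < Δt) (hσv : 0 < σv)
    (hdv : dv 0 < dv 1) :
    (letI noise := (gaussianReal 0 (σv ^ 2).toNNReal).prod (gaussianReal 0 (σp ^ 2).toNNReal)
    letI EVhat : Fin 2 → ℝ := fun a =>
      c * (∫ e : ℝ × ℝ, (v + dv a + g a * e.1) ∂noise) *
        (∫ e : ℝ × ℝ, (p + (v + dv a + g a * e.1) * Δt + e.2) ∂noise)
    0 < EVhat 1 - EVhat 0) ↔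
      0 < p / Δt + 2 * v + dv 1 + dv 0 :=
  lagged_model_value_comparison_general v p c Δt σv σp dv g hc hΔt hdv
end
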